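/- Fix N ≥ 3 and let H_B and H_C be the MCS battery and charger Hamiltonians on N+1 qubits. Then ‖⁅H_B, H_C⁆ - (2 * Complex.I) • (σz^{(0)} * (∑_{i=1}^N σx^{(i)})^2)‖ ≤ 8 * N. In other words, the commutator equals its collective central-spin term up to a remainder of operator norm O(N), so the ‖⁅H_B,H_C⁆‖ is 2N² + O(N). -/

import Mathlib

open scoped Matrix.Norms.L2Operator
open scoped Matrix

/-- The 2×2 matrix `P` acting on site `j` of a chain of `N+1` qubits
(identity elsewhere): `P⁽ʲ⁾ f g = P (f j) (g j) * ∏_{k ≠ j} δ_{f k, g k}`. -/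
def siteOp {N : ℕ} (P : Matrix (Fin 2) (Fin 2) ℂ) (j : Fin (N + 1)) :
    Matrix (Fin (N + 1) → Fin 2) (Fin (N + 1) → Fin 2) ℂ :=
  fun f g => P (f j) (g j) * ∏ k ∈ Finset.univ.erase j, (if f k = g k then (1 : ℂ) else 0)

/-- Pauli X. -/
def σx : Matrix (Fin 2) (Fin 2) ℂ := !![0, 1; 1, 0]
/-- Pauli Y. -/
def σy : Matrix (Fin 2) (Fin 2) ℂ := !![0, -Complex.I; Complex.I, 0]
/-- Pauli Z. -/
def σz : Matrix (Fin 2) (Fin 2) ℂ := !![1, 0; 0, -1]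

/-- The peripheral site labelled `i+1` (site `0` is the central spin). -/
def per {N : ℕ} (i : Fin N) : Fin (N + 1) := i.succ

/-- The cyclic successor `i ⊕ 1` among the peripheral sites `{1, …, N}`. -/
def perS {N : ℕ} (i : Fin N) : Fin (N + 1) :=
  ⟨(i.1 + 1) % N + 1, Nat.succ_lt_succ (Nat.mod_lt _ i.pos)⟩
/-- The cyclic predecessor `i ⊖ 1` among the peripheral sites `{1, …, N}`. -/
def perP {N : ℕ} (i : Fin N) : Fin (N + 1) :=
  ⟨(i.1 + (N - 1)) % N + 1, Nat.succ_lt_succ (Nat.mod_lt _ i.pos)⟩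

/-- The modified central-spin (MCS) battery Hamiltonian
`H_B = ∑_{i=1}^N σx⁽⁰⁾ σx⁽ⁱ⁾ + ∑_{i=1}^N σz⁽ⁱ⁾ σz⁽ⁱ⊕¹⁾` on `N+1` qubits (PBC). -/
noncomputable def HB (N : ℕ) :
    Matrix (Fin (N + 1) → Fin 2) (Fin (N + 1) → Fin 2) ℂ :=
  (∑ i : Fin N, siteOp σx 0 * siteOp σx (per i)) +
  (∑ i : Fin N, siteOp σz (per i) * siteOp σz (perS i))

/-- The modified central-spin (MCS) charger Hamiltonian
`H_C = ∑_{i=1}^N σy⁽⁰⁾ σx⁽ⁱ⁾ + ∑_{i=1}^N σz⁽ⁱ⁾ σz⁽ⁱ⊕¹⁾` on `N+1` qubits (PBC). -/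
noncomputable def HC (N : ℕ) :
    Matrix (Fin (N + 1) → Fin 2) (Fin (N + 1) → Fin 2) ℂ :=
  (∑ i : Fin N, siteOp σy 0 * siteOp σx (per i)) +
  (∑ i : Fin N, siteOp σz (per i) * siteOp σz (perS i))

/-!
Write `H_B = A_x + D` and `H_C = A_y + D`, where `A_P = P⁽⁰⁾ S` with `S = ∑ᵢ σx⁽ⁱ⁾` is the star
coupling and `D` the ring coupling. Since `S` commutes with every operator on the central spin,
`⁅A_x, A_y⁆ = ⁅σx, σy⁆⁽⁰⁾ S² = 2i σz⁽⁰⁾ S²` is exactly the collective term, and the remainder is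
`⁅A_x, D⁆ - ⁅A_y, D⁆`. A bond `σz⁽ʲ⁾ σz⁽ʲ⊕¹⁾` of `D` commutes with all but at most two terms of
`A_P`, and each of those commutators of unitaries has norm at most `2`; so each of the two
remainder commutators has norm at most `4N`.
-/

open scoped Finset

section SiteOp

variable {N : ℕ} (P Q : Matrix (Fin 2) (Fin 2) ℂ)

lemma siteOp_apply (j : Fin (N + 1)) (f g : Fin (N + 1) → Fin 2) :
    siteOp P j f g = if ∀ k, k ≠ j → f k = g k then P (f j) (g j) else 0 := by
  simp [siteOp, Finset.prod_boole]

lemma siteOp_apply_eq_sum (j : Fin (N + 1)) (f g : Fin (N + 1) → Fin 2) :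
    siteOp P j f g = ∑ b, if f = Function.update g j b then P b (g j) else 0 := by
  simp_rw [siteOp_apply, Function.eq_update_iff, ite_and]
  simp

lemma mul_siteOp_apply (M : Matrix (Fin (N + 1) → Fin 2) (Fin (N + 1) → Fin 2) ℂ)
    (j : Fin (N + 1)) (f g : Fin (N + 1) → Fin 2) :
    (M * siteOp P j) f g = ∑ b, M f (Function.update g j b) * P b (g j) := by
  simp_rw [Matrix.mul_apply, siteOp_apply_eq_sum, Finset.mul_sum, mul_ite, mul_zero]
  rw [Finset.sum_comm]
  simp

lemma siteOp_mul_siteOp (j : Fin (N + 1)) : siteOp P j * siteOp Q j = siteOp (P * Q) j := by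
  ext f g
  have hupd : ∀ b, (∀ k, k ≠ j → f k = Function.update g j b k) ↔ ∀ k, k ≠ j → f k = g k :=
    fun b => forall₂_congr fun k hk => by rw [Function.update_of_ne hk]
  simp_rw [mul_siteOp_apply, siteOp_apply, Function.update_self, hupd]
  split_ifs <;> simp [Matrix.mul_apply]

lemma siteOp_mul_siteOp_apply_of_ne {j k : Fin (N + 1)} (hjk : j ≠ k)
    (f g : Fin (N + 1) → Fin 2) :
    (siteOp P j * siteOp Q k) f g =
      if ∀ m, m ≠ j → m ≠ k → f m = g m then P (f j) (g j) * Q (f k) (g k) else 0 := by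
  have hupd : ∀ b, (∀ m, m ≠ j → f m = Function.update g k b m) ↔
      f k = b ∧ ∀ m, m ≠ j → m ≠ k → f m = g m := by
    intro b
    simp only [Function.update_apply]
    grind
  simp_rw [mul_siteOp_apply, siteOp_apply, Function.update_of_ne hjk, hupd, ite_and]
  simp

lemma siteOp_commute {j k : Fin (N + 1)} (hjk : j ≠ k) : Commute (siteOp P j) (siteOp Q k) := by
  ext f g
  rw [siteOp_mul_siteOp_apply_of_ne P Q hjk, siteOp_mul_siteOp_apply_of_ne Q P hjk.symm]
  simp only [Imp.swap (a := _ ≠ j), mul_comm]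

lemma siteOp_one (j : Fin (N + 1)) : siteOp (1 : Matrix (Fin 2) (Fin 2) ℂ) j = 1 := by
  ext f g
  simp only [siteOp_apply, Matrix.one_apply, funext_iff]
  grind

lemma siteOp_conjTranspose (j : Fin (N + 1)) : (siteOp P j)ᴴ = siteOp Pᴴ j := by
  ext f g
  simp only [Matrix.conjTranspose_apply, siteOp_apply, apply_ite star, star_zero, eq_comm]

lemma siteOp_smul (c : ℂ) (j : Fin (N + 1)) : siteOp (c • P) j = c • siteOp P j := by
  ext f g
  simp only [siteOp, Matrix.smul_apply, smul_eq_mul, mul_assoc]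

lemma siteOp_sub (j : Fin (N + 1)) : siteOp (P - Q) j = siteOp P j - siteOp Q j := by
  ext f g
  simp only [siteOp, Matrix.sub_apply, sub_mul]

lemma siteOp_lie (j : Fin (N + 1)) : siteOp ⁅P, Q⁆ j = ⁅siteOp P j, siteOp Q j⁆ := by
  simp only [Ring.lie_def, siteOp_sub, siteOp_mul_siteOp]

lemma siteOp_mem_unitary {P : Matrix (Fin 2) (Fin 2) ℂ}
    (hP : P ∈ unitary (Matrix (Fin 2) (Fin 2) ℂ)) (j : Fin (N + 1)) : siteOp P j ∈ unitary _ := by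
  rw [Unitary.mem_iff] at hP ⊢
  simp only [Matrix.star_eq_conjTranspose, siteOp_conjTranspose, siteOp_mul_siteOp] at hP ⊢
  simp only [hP, siteOp_one, and_self]

end SiteOp

lemma σx_mem_unitary : σx ∈ unitary (Matrix (Fin 2) (Fin 2) ℂ) := by
  rw [Unitary.mem_iff, Matrix.star_eq_conjTranspose]
  constructor <;> ext i j <;> fin_cases i <;> fin_cases j <;> simp [σx, Matrix.mul_apply]

lemma σy_mem_unitary : σy ∈ unitary (Matrix (Fin 2) (Fin 2) ℂ) := by
  rw [Unitary.mem_iff, Matrix.star_eq_conjTranspose]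
  constructor <;> ext i j <;> fin_cases i <;> fin_cases j <;> simp [σy, Matrix.mul_apply]

lemma σz_mem_unitary : σz ∈ unitary (Matrix (Fin 2) (Fin 2) ℂ) := by
  rw [Unitary.mem_iff, Matrix.star_eq_conjTranspose]
  constructor <;> ext i j <;> fin_cases i <;> fin_cases j <;> simp [σz, Matrix.mul_apply]

lemma lie_σx_σy : ⁅σx, σy⁆ = (2 * Complex.I) • σz := by
  ext i j
  fin_cases i <;> fin_cases j <;> simp [σx, σy, σz, Ring.lie_def] <;> ring

section NormedRing

variable {R : Type*} [NormedRing R]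

lemma norm_lie_le (a b : R) : ‖⁅a, b⁆‖ ≤ 2 * (‖a‖ * ‖b‖) := by
  rw [Ring.lie_def]
  calc ‖a * b - b * a‖ ≤ ‖a‖ * ‖b‖ + ‖b‖ * ‖a‖ :=
        (norm_sub_le _ _).trans (add_le_add (norm_mul_le _ _) (norm_mul_le _ _))
    _ = 2 * (‖a‖ * ‖b‖) := by ring

lemma norm_lie_le_two_of_mem_unitary [StarRing R] [CStarRing R] [Nontrivial R] {u v : R}
    (hu : u ∈ unitary R) (hv : v ∈ unitary R) : ‖⁅u, v⁆‖ ≤ 2 := by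
  simpa [CStarRing.norm_of_mem_unitary hu, CStarRing.norm_of_mem_unitary hv] using norm_lie_le u v

lemma norm_sum_lie_le_of_commute {ι : Type*} [Fintype ι] (a : ι → R) (b : R) (s : Finset ι)
    (hs : ∀ i ∉ s, Commute (a i) b) {c : ℝ} (hc : ∀ i, ‖⁅a i, b⁆‖ ≤ c) :
    ‖⁅∑ i, a i, b⁆‖ ≤ #s * c := by
  have hlin : ⁅∑ i, a i, b⁆ = ∑ i, ⁅a i, b⁆ := by
    simp only [Ring.lie_def, Finset.sum_mul, Finset.mul_sum, Finset.sum_sub_distrib]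
  rw [hlin, ← Finset.sum_subset (Finset.subset_univ s) fun i _ hi => commute_iff_lie_eq.1 (hs i hi)]
  exact (norm_sum_le _ _).trans (by simpa using Finset.sum_le_card_nsmul s _ c fun i _ => hc i)

end NormedRing

lemma lie_mul_mul_of_commute {R : Type*} [Ring R] {p q s : R} (hp : Commute p s)
    (hq : Commute q s) :
    ⁅p * s, q * s⁆ = ⁅p, q⁆ * s ^ 2 := by
  simp only [Ring.lie_def, sq, sub_mul, mul_assoc, hq.symm.left_comm, hp.symm.left_comm]

section Couplings

variable (N : ℕ)

noncomputable def starCoupling (P : Matrix (Fin 2) (Fin 2) ℂ) :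
    Matrix (Fin (N + 1) → Fin 2) (Fin (N + 1) → Fin 2) ℂ :=
  ∑ i : Fin N, siteOp P 0 * siteOp σx (per i)

noncomputable def ringCoupling : Matrix (Fin (N + 1) → Fin 2) (Fin (N + 1) → Fin 2) ℂ :=
  ∑ i : Fin N, siteOp σz (per i) * siteOp σz (perS i)

lemma HB_eq : HB N = starCoupling N σx + ringCoupling N := rfl

lemma HC_eq : HC N = starCoupling N σy + ringCoupling N := rfl

variable {N}

lemma perS_ne_zero (i : Fin N) : perS i ≠ 0 := by
  simp [perS, Fin.ext_iff]

lemma lie_starCoupling (P Q : Matrix (Fin 2) (Fin 2) ℂ) :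
    ⁅starCoupling N P, starCoupling N Q⁆ =
      siteOp ⁅P, Q⁆ 0 * (∑ i : Fin N, siteOp σx (per i)) ^ 2 := by
  have hcomm : ∀ R, Commute (siteOp R 0) (∑ i : Fin N, siteOp σx (per i)) := fun R =>
    Commute.sum_right _ _ _ fun i _ => siteOp_commute R σx (Fin.succ_ne_zero i).symm
  rw [starCoupling, starCoupling, ← Finset.mul_sum, ← Finset.mul_sum,
    lie_mul_mul_of_commute (hcomm P) (hcomm Q), siteOp_lie]

lemma card_filter_per_mem_le (j : Fin N) :
    #{i | per i ∈ ({per j, perS j} : Finset (Fin (N + 1)))} ≤ 2 :=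
  (Finset.card_le_card_of_injOn per (fun _ hi => (Finset.mem_filter.1 hi).2)
    (Fin.succ_injective N).injOn).trans Finset.card_le_two

lemma commute_starTerm_ringTerm (P : Matrix (Fin 2) (Fin 2) ℂ) {i j : Fin N}
    (hij : per i ∉ ({per j, perS j} : Finset (Fin (N + 1)))) :
    Commute (siteOp P 0 * siteOp σx (per i)) (siteOp σz (per j) * siteOp σz (perS j)) := by
  simp only [Finset.mem_insert, Finset.mem_singleton, not_or] at hij
  exact ((siteOp_commute _ _ (Fin.succ_ne_zero j).symm).mul_right
      (siteOp_commute _ _ (perS_ne_zero j).symm)).mul_left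
    ((siteOp_commute _ _ hij.1).mul_right (siteOp_commute _ _ hij.2))

lemma norm_lie_starCoupling_ringCoupling_le {P : Matrix (Fin 2) (Fin 2) ℂ}
    (hP : P ∈ unitary (Matrix (Fin 2) (Fin 2) ℂ)) :
    ‖⁅starCoupling N P, ringCoupling N⁆‖ ≤ 4 * N := by
  have hlin : ⁅starCoupling N P, ringCoupling N⁆ =
      ∑ j : Fin N, ⁅starCoupling N P, siteOp σz (per j) * siteOp σz (perS j)⁆ := by
    simp only [ringCoupling, Ring.lie_def, Finset.sum_mul, Finset.mul_sum, Finset.sum_sub_distrib]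
  have hterm : ∀ j : Fin N,
      ‖⁅starCoupling N P, siteOp σz (per j) * siteOp σz (perS j)⁆‖ ≤ 4 := fun j => by
    rw [starCoupling]
    calc _ ≤ (#{i | per i ∈ ({per j, perS j} : Finset (Fin (N + 1)))} : ℝ) * 2 :=
        norm_sum_lie_le_of_commute (fun i => siteOp P 0 * siteOp σx (per i)) _ _
          (fun _ hi => commute_starTerm_ringTerm P fun h =>
            hi (Finset.mem_filter.2 ⟨Finset.mem_univ _, h⟩))
          fun i => norm_lie_le_two_of_mem_unitary
            (mul_mem (siteOp_mem_unitary hP 0) (siteOp_mem_unitary σx_mem_unitary _))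
            (mul_mem (siteOp_mem_unitary σz_mem_unitary _) (siteOp_mem_unitary σz_mem_unitary _))
      _ ≤ 2 * 2 := by gcongr; exact_mod_cast card_filter_per_mem_le j
      _ = 4 := by norm_num
  rw [hlin]
  calc _ ≤ ∑ j : Fin N, (4 : ℝ) := (norm_sum_le _ _).trans (Finset.sum_le_sum fun j _ => hterm j)
    _ = 4 * N := by simp [mul_comm]

end Couplings

theorem mcs_commutator_remainder_bound_general (N : ℕ) :
    ‖⁅HB N, HC N⁆
        - (2 * Complex.I) • (siteOp σz 0 * (∑ i : Fin N, siteOp σx (per i)) ^ 2)‖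
      ≤ 8 * (N : ℝ) := by
  have hsplit : ⁅HB N, HC N⁆ = ⁅starCoupling N σx, starCoupling N σy⁆ +
      (⁅starCoupling N σx, ringCoupling N⁆ - ⁅starCoupling N σy, ringCoupling N⁆) := by
    rw [HB_eq, HC_eq]
    simp only [Ring.lie_def]
    noncomm_ring
  rw [hsplit, lie_starCoupling, lie_σx_σy, siteOp_smul, smul_mul_assoc, add_sub_cancel_left]
  calc _ ≤ 4 * (N : ℝ) + 4 * N :=
        (norm_sub_le _ _).trans (add_le_add (norm_lie_starCoupling_ringCoupling_le σx_mem_unitary)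
          (norm_lie_starCoupling_ringCoupling_le σy_mem_unitary))
    _ = 8 * N := by ring

/-- The MCS commutator equals its collective central-spin term
up to a remainder of operator norm at most `8N`; hence
`‖⁅H_B, H_C⁆‖ = 2N² + O(N)`. -/
theorem mcs_commutator_remainder_bound (N : ℕ) (hN : 3 ≤ N) :
    ‖⁅HB N, HC N⁆
        - (2 * Complex.I) • (siteOp σz 0 * (∑ i : Fin N, siteOp σx (per i)) ^ 2)‖
      ≤ 8 * (N : ℝ) :=
  mcs_commutator_remainder_bound_general N
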